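/- A family 𝒯 of theories is representable by a finite default theory (D,W) (both D and W finite) if and only if 𝒯 is a finite non-including family of finitely generated theories, i.e., each T ∈ 𝒯 satisfies T = Cn(F) for some finite set F of formulas. -/

import Mathlib

/-- Propositional formulas over a set of atoms `α`. -/
inductive PropForm (α : Type) : Type
  | atom : α → PropForm α
  | fls  : PropForm α
  | impl : PropForm α → PropForm α → PropForm α

namespace PropForm

/-- Negation `¬φ`, definable as `φ → ⊥`. -/
def neg {α : Type} (φ : PropForm α) : PropForm α := impl φ fls

/-- Conjunction, definable from implication and falsum. -/
def conj {α : Type} (φ ψ : PropForm α) : PropForm α := (φ.impl ψ.neg).neg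

/-- Biimplication `φ ↔ ψ`. -/
def biimp {α : Type} (φ ψ : PropForm α) : PropForm α := conj (φ.impl ψ) (ψ.impl φ)

/-- Evaluation of a formula under a valuation of the atoms. -/
def eval {α : Type} (v : α → Prop) : PropForm α → Prop
  | atom a   => v a
  | fls      => False
  | impl φ ψ => eval v φ → eval v ψ

/-- Renaming/embedding of atoms. -/
def map {α β : Type} (f : α → β) : PropForm α → PropForm β
  | atom a   => atom (f a)
  | fls      => fls
  | impl φ ψ => impl (map f φ) (map f ψ)

end PropForm

/-- Classical propositional consequence operator. -/
def Cn {α : Type} (S : Set (PropForm α)) : Set (PropForm α) :=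
  {φ | ∀ v : α → Prop, (∀ ψ ∈ S, ψ.eval v) → φ.eval v}

/-- A theory: a set of formulas closed under propositional consequence. -/
def IsTheory {α : Type} (S : Set (PropForm α)) : Prop := Cn S ⊆ S

/-- A set of formulas is consistent if its consequences are not the whole language. -/
def Consistent {α : Type} (S : Set (PropForm α)) : Prop := Cn S ≠ Set.univ

/-- A default `α : Γ / β` with prerequisite, finite set of justifications, consequent. -/
structure Default (α : Type) where
  pre : PropForm α
  jus : Finset (PropForm α)
  con : PropForm α

/-- A default is applicable w.r.t. `S` if no justification's negation follows from `S`. -/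
def Default.Applicable {α : Type} (S : Set (PropForm α)) (d : Default α) : Prop :=
  ∀ γ ∈ d.jus, γ.neg ∉ Cn S

/-- The reduct of `D` w.r.t. `S`: the monotone rules `pre/con` of `S`-applicable defaults. -/
def Reduct {α : Type} (D : Set (Default α)) (S : Set (PropForm α)) :
    Set (PropForm α × PropForm α) :=
  {r | ∃ d ∈ D, d.Applicable S ∧ r = (d.pre, d.con)}

/-- `Cn^B(W)`: consequences of `W` in propositional calculus augmented with rules `B`;
the least set containing `W`, closed under `Cn`, and closed under the rules of `B`. -/
def CnRules {α : Type} (B : Set (PropForm α × PropForm α)) (W : Set (PropForm α)) :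
    Set (PropForm α) :=
  ⋂₀ {S | W ⊆ S ∧ Cn S ⊆ S ∧ ∀ r ∈ B, r.1 ∈ S → r.2 ∈ S}

/-- `S` is an extension of the default theory `(D, W)`. -/
def IsExtension {α : Type} (D : Set (Default α)) (W S : Set (PropForm α)) : Prop :=
  S = CnRules (Reduct D S) W

/-- The family of all extensions of `(D, W)`. -/
def ext {α : Type} (D : Set (Default α)) (W : Set (PropForm α)) : Set (Set (PropForm α)) :=
  {S | IsExtension D W S}

/-- A default is prerequisite-free if its prerequisite is a tautology. -/
def Default.PrereqFree {α : Type} (d : Default α) : Prop :=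
  d.pre ∈ Cn (∅ : Set (PropForm α))

/-- A default is normal if it has the form `α : {β} / β`. -/
def Default.Normal {α : Type} (d : Default α) : Prop := d.jus = {d.con}

/-! An extension is `Cn` of `W` together with the consequents of some of the defaults, so a
finite default theory has finitely many extensions, each finitely generated; they form an
antichain because the reduct shrinks as the extension grows. Conversely, write each member of
the family as `Cn {φ}`; the prerequisite-free default `⊤ : {¬ψ | ψ ≠ φ} / φ` fires exactly
when no rival generator is derivable, so the extensions of these defaults are exactly the
`Cn {φ}`. The empty family is represented by `⊤ : ⊤ / ⊥`, which has no extension. -/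

variable {α : Type}

namespace PropForm

instance : Inhabited (PropForm α) := ⟨fls⟩

def top : PropForm α := fls.impl fls

@[simp]
lemma eval_top (v : α → Prop) : (top : PropForm α).eval v := id

@[simp]
lemma eval_fls (v : α → Prop) : ¬(fls : PropForm α).eval v := id

@[simp]
lemma eval_impl (v : α → Prop) (φ ψ : PropForm α) :
    (φ.impl ψ).eval v ↔ (φ.eval v → ψ.eval v) := Iff.rfl

@[simp]
lemma eval_neg (v : α → Prop) (φ : PropForm α) : φ.neg.eval v ↔ ¬φ.eval v := Iff.rfl

@[simp]
lemma eval_conj (v : α → Prop) (φ ψ : PropForm α) :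
    (φ.conj ψ).eval v ↔ φ.eval v ∧ ψ.eval v := by
  simp only [conj, eval_neg, eval_impl]
  tauto

lemma exists_eval_iff_forall_mem (F : Finset (PropForm α)) :
    ∃ θ : PropForm α, ∀ v, θ.eval v ↔ ∀ ψ ∈ F, ψ.eval v := by
  classical
  induction F using Finset.induction_on with
  | empty => exact ⟨top, by simp⟩
  | insert φ F _ ih =>
    obtain ⟨θ, hθ⟩ := ih
    exact ⟨φ.conj θ, by simp [hθ]⟩

end PropForm

open PropForm

section Consequence

lemma subset_Cn (S : Set (PropForm α)) : S ⊆ Cn S := fun _ hφ _ hv => hv _ hφ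

lemma Cn_mono {S T : Set (PropForm α)} (h : S ⊆ T) : Cn S ⊆ Cn T :=
  fun _ hφ v hv => hφ v fun ψ hψ => hv ψ (h hψ)

@[simp]
lemma Cn_Cn (S : Set (PropForm α)) : Cn (Cn S) = Cn S :=
  (Cn_mono (subset_Cn S)).antisymm' fun _ hφ v hv => hφ v fun _ hψ => hψ v hv

lemma Cn_congr {S T : Set (PropForm α)}
    (h : ∀ v, (∀ ψ ∈ S, ψ.eval v) ↔ ∀ ψ ∈ T, ψ.eval v) : Cn S = Cn T := by
  ext φ
  exact forall_congr' fun v => imp_congr_left (h v)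

lemma Cn_singleton_subset_iff {φ : PropForm α} {S : Set (PropForm α)} :
    Cn {φ} ⊆ Cn S ↔ φ ∈ Cn S :=
  ⟨fun h => h (subset_Cn _ rfl), fun h => (Cn_Cn S ▸ Cn_mono (Set.singleton_subset_iff.2 h))⟩

lemma exists_Cn_singleton_eq (F : Finset (PropForm α)) : ∃ θ : PropForm α, Cn {θ} = Cn F := by
  obtain ⟨θ, hθ⟩ := exists_eval_iff_forall_mem F
  exact ⟨θ, Cn_congr fun v => by simpa using hθ v⟩

lemma neg_neg_mem_Cn_iff {φ : PropForm α} {S : Set (PropForm α)} :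
    φ.neg.neg ∈ Cn S ↔ φ ∈ Cn S := by
  simp only [Cn, Set.mem_ofPred_eq, eval_neg, not_not]

lemma neg_top_mem_Cn_iff {S : Set (PropForm α)} :
    (top : PropForm α).neg ∈ Cn S ↔ fls ∈ Cn S := by
  simp only [Cn, Set.mem_ofPred_eq, eval_neg, eval_top, eval_fls, not_true_eq_false]

lemma consistent_iff_fls_notMem_Cn {S : Set (PropForm α)} : Consistent S ↔ fls ∉ Cn S := by
  refine ⟨fun h hfls => h (Set.eq_univ_of_forall fun _ v hv => ?_),
    fun h huniv => h (huniv ▸ trivial)⟩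
  exact absurd (hfls v hv) (eval_fls v)

lemma consistent_empty : Consistent (∅ : Set (PropForm α)) :=
  consistent_iff_fls_notMem_Cn.2 fun h => h (fun _ => True) (by simp)

end Consequence

section Rules

variable {B B' : Set (PropForm α × PropForm α)} {W S : Set (PropForm α)}

lemma CnRules_subset (hW : W ⊆ S) (hS : Cn S ⊆ S) (hB : ∀ r ∈ B, r.1 ∈ S → r.2 ∈ S) :
    CnRules B W ⊆ S :=
  Set.sInter_subset_of_mem ⟨hW, hS, hB⟩

lemma subset_CnRules : W ⊆ CnRules B W :=
  fun _ hφ => Set.mem_sInter.2 fun _ hS => hS.1 hφ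

lemma Cn_CnRules_subset : Cn (CnRules B W) ⊆ CnRules B W :=
  fun _ hφ => Set.mem_sInter.2 fun _ hS => hS.2.1 (Cn_mono (Set.sInter_subset_of_mem hS) hφ)

lemma snd_mem_CnRules {r : PropForm α × PropForm α} (hr : r ∈ B) (h : r.1 ∈ CnRules B W) :
    r.2 ∈ CnRules B W :=
  Set.mem_sInter.2 fun _ hS => hS.2.2 r hr (Set.sInter_subset_of_mem hS h)

lemma CnRules_mono (h : B' ⊆ B) : CnRules B' W ⊆ CnRules B W :=
  CnRules_subset subset_CnRules Cn_CnRules_subset fun _ hr => snd_mem_CnRules (h hr)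

lemma CnRules_eq_Cn_union :
    CnRules B W = Cn (W ∪ Prod.snd '' {r ∈ B | r.1 ∈ CnRules B W}) := by
  set C := Prod.snd '' {r ∈ B | r.1 ∈ CnRules B W}
  have hC : Cn (W ∪ C) ⊆ CnRules B W := by
    refine (Cn_mono (Set.union_subset subset_CnRules ?_)).trans Cn_CnRules_subset
    rintro _ ⟨r, ⟨hr, h⟩, rfl⟩
    exact snd_mem_CnRules hr h
  refine (CnRules_subset ?_ (Cn_Cn _).le fun r hr h => ?_).antisymm hC
  · exact Set.subset_union_left.trans (subset_Cn _)
  · exact subset_Cn _ (Or.inr ⟨r, ⟨hr, hC h⟩, rfl⟩)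

lemma CnRules_eq_Cn_union_of_forall_fst_mem
    (h : ∀ r ∈ B, r.1 ∈ Cn (∅ : Set (PropForm α))) :
    CnRules B W = Cn (W ∪ Prod.snd '' B) := by
  have hB : {r ∈ B | r.1 ∈ CnRules B W} = B :=
    Set.sep_eq_self_iff_mem_true.2 fun r hr =>
      Cn_CnRules_subset (Cn_mono (Set.empty_subset _) (h r hr))
  rw [CnRules_eq_Cn_union, hB]

end Rules

section Extensions

variable {D : Set (Default α)} {W S S' : Set (PropForm α)}

lemma Reduct_anti (h : S ⊆ S') : Reduct D S' ⊆ Reduct D S := by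
  rintro _ ⟨d, hd, happ, rfl⟩
  exact ⟨d, hd, fun γ hγ hmem => happ γ hγ (Cn_mono h hmem), rfl⟩

lemma snd_image_Reduct : Prod.snd '' Reduct D S = Default.con '' {d ∈ D | d.Applicable S} := by
  ext φ
  constructor
  · rintro ⟨_, ⟨d, hd, happ, rfl⟩, rfl⟩
    exact ⟨d, ⟨hd, happ⟩, rfl⟩
  · rintro ⟨d, ⟨hd, happ⟩, rfl⟩
    exact ⟨_, ⟨d, hd, happ, rfl⟩, rfl⟩

lemma IsExtension.exists_eq_Cn_union (hS : IsExtension D W S) :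
    ∃ C ⊆ Default.con '' D, S = Cn (W ∪ C) := by
  refine ⟨_, ?_, hS.trans CnRules_eq_Cn_union⟩
  rintro _ ⟨_, ⟨⟨d, hd, -, rfl⟩, -⟩, rfl⟩
  exact ⟨d, hd, rfl⟩

lemma IsExtension.isTheory (hS : IsExtension D W S) : IsTheory S := by
  rw [IsTheory, hS]
  exact Cn_CnRules_subset

lemma IsExtension.eq_of_subset (hS : IsExtension D W S) (hS' : IsExtension D W S')
    (h : S ⊆ S') : S = S' :=
  h.antisymm <| calc
    S' = CnRules (Reduct D S') W := hS'
    _ ⊆ CnRules (Reduct D S) W := CnRules_mono (Reduct_anti h)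
    _ = S := hS.symm

lemma IsExtension.exists_finset_eq_Cn (hD : D.Finite) (hW : W.Finite)
    (hS : IsExtension D W S) : ∃ F : Finset (PropForm α), S = Cn F := by
  obtain ⟨C, hC, rfl⟩ := hS.exists_eq_Cn_union
  obtain ⟨F, hF⟩ := (hW.union ((hD.image _).subset hC)).exists_finset_coe
  exact ⟨F, by rw [hF]⟩

lemma ext_finite (hD : D.Finite) (W : Set (PropForm α)) : (ext D W).Finite := by
  refine (((hD.image Default.con).finite_subsets).image fun C => Cn (W ∪ C)).subset ?_
  intro S hS
  obtain ⟨C, hC, rfl⟩ := IsExtension.exists_eq_Cn_union hS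
  exact ⟨C, hC, rfl⟩

lemma mem_ext_iff_of_prereqFree (hD : ∀ d ∈ D, d.PrereqFree) :
    S ∈ ext D W ↔ S = Cn (W ∪ Default.con '' {d ∈ D | d.Applicable S}) := by
  have hpre : ∀ r ∈ Reduct D S, r.1 ∈ Cn (∅ : Set (PropForm α)) := by
    rintro _ ⟨d, hd, -, rfl⟩
    exact hD d hd
  rw [← snd_image_Reduct, ← CnRules_eq_Cn_union_of_forall_fst_mem hpre]
  rfl

end Extensions

section Representation

def contradictoryDefault : Default α := ⟨top, {top}, fls⟩

lemma ext_contradictoryDefault {W : Set (PropForm α)} (hW : Consistent W) :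
    ext {(contradictoryDefault : Default α)} W = ∅ := by
  refine Set.eq_empty_of_forall_notMem fun S hS => ?_
  have hpre : ∀ d ∈ ({contradictoryDefault} : Set (Default α)), d.PrereqFree := by
    simp [Default.PrereqFree, contradictoryDefault, Cn]
  rw [mem_ext_iff_of_prereqFree hpre] at hS
  have happ : contradictoryDefault.Applicable S ↔ fls ∉ Cn S := by
    simp [Default.Applicable, contradictoryDefault, neg_top_mem_Cn_iff]
  by_cases hfls : fls ∈ Cn S
  · have hnone : {d ∈ ({contradictoryDefault} : Set (Default α)) | d.Applicable S} = ∅ := by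
      refine Set.eq_empty_of_forall_notMem ?_
      rintro d ⟨rfl, hdapp⟩
      exact happ.1 hdapp hfls
    rw [hnone, Set.image_empty, Set.union_empty] at hS
    exact consistent_iff_fls_notMem_Cn.1 hW (by rwa [hS, Cn_Cn] at hfls)
  · refine hfls (subset_Cn _ ?_)
    rw [hS]
    exact subset_Cn _ (Or.inr ⟨contradictoryDefault, ⟨rfl, happ.2 hfls⟩, rfl⟩)

open Classical in
noncomputable def selectorDefault (Θ : Finset (PropForm α)) (φ : PropForm α) : Default α :=
  ⟨top, (Θ.erase φ).image neg, φ⟩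

def selectorDefaults (Θ : Finset (PropForm α)) : Set (Default α) := selectorDefault Θ '' Θ

variable {Θ : Finset (PropForm α)}

lemma selectorDefault_applicable_iff {φ : PropForm α} {S : Set (PropForm α)} :
    (selectorDefault Θ φ).Applicable S ↔ ∀ ψ ∈ Θ, ψ ≠ φ → ψ ∉ Cn S := by
  simp only [Default.Applicable, selectorDefault, Finset.mem_image, Finset.mem_erase,
    forall_exists_index, and_imp]
  constructor
  · exact fun h ψ hψ hne hmem => h _ ψ hne hψ rfl (neg_neg_mem_Cn_iff.2 hmem)
  · rintro h _ ψ hne hψ rfl hmem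
    exact h ψ hψ hne (neg_neg_mem_Cn_iff.1 hmem)

def selectedBy (Θ : Finset (PropForm α)) (S : Set (PropForm α)) : Set (PropForm α) :=
  {φ ∈ (Θ : Set (PropForm α)) | ∀ ψ ∈ Θ, ψ ≠ φ → ψ ∉ Cn S}

lemma mem_ext_selectorDefaults_iff {S : Set (PropForm α)} :
    S ∈ ext (selectorDefaults Θ) ∅ ↔ S = Cn (selectedBy Θ S) := by
  have hpre : ∀ d ∈ selectorDefaults Θ, d.PrereqFree := by
    rintro _ ⟨φ, -, rfl⟩
    exact fun v _ => eval_top v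
  have hsel : Default.con '' {d ∈ selectorDefaults Θ | d.Applicable S} = selectedBy Θ S := by
    ext φ
    constructor
    · rintro ⟨_, ⟨⟨φ, hφ, rfl⟩, happ⟩, rfl⟩
      exact ⟨hφ, selectorDefault_applicable_iff.1 happ⟩
    · rintro ⟨hφ, happ⟩
      exact ⟨_, ⟨⟨φ, hφ, rfl⟩, selectorDefault_applicable_iff.2 happ⟩, rfl⟩
  rw [mem_ext_iff_of_prereqFree hpre, hsel, Set.empty_union]

lemma selectedBy_eq_singleton {φ : PropForm α} {S : Set (PropForm α)}
    (hφ : φ ∈ selectedBy Θ S) (hφS : φ ∈ Cn S) : selectedBy Θ S = {φ} := by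
  refine Set.eq_singleton_iff_unique_mem.2 ⟨hφ, fun φ' hφ' => ?_⟩
  by_contra hne
  exact hφ'.2 φ hφ.1 (Ne.symm hne) hφS

lemma ext_selectorDefaults (hne : Θ.Nonempty)
    (hΘ : (Θ : Set (PropForm α)).Pairwise fun φ ψ => ψ ∉ Cn {φ}) :
    ext (selectorDefaults Θ) ∅ = (fun φ => Cn {φ}) '' Θ := by
  ext S
  rw [mem_ext_selectorDefaults_iff]
  constructor
  · intro hS
    obtain ⟨φ, hφ⟩ : (selectedBy Θ S).Nonempty := by
      by_contra! hnone
      rw [hnone] at hS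
      obtain ⟨φ₀, hφ₀⟩ := hne
      obtain ⟨ψ, hψ, hψφ₀, hψS⟩ : ∃ ψ ∈ Θ, ψ ≠ φ₀ ∧ ψ ∈ Cn S := by
        by_contra! h
        exact (Set.eq_empty_iff_forall_notMem.1 hnone) φ₀ ⟨hφ₀, h⟩
      rw [hS, Cn_Cn] at hψS
      exact hΘ hφ₀ hψ hψφ₀.symm (Cn_mono (Set.empty_subset _) hψS)
    have hφS : φ ∈ Cn S := subset_Cn _ (hS ▸ subset_Cn _ hφ)
    exact ⟨φ, hφ.1, by rw [hS, selectedBy_eq_singleton hφ hφS]⟩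
  · rintro ⟨φ, hφ, rfl⟩
    have hsel : φ ∈ selectedBy Θ (Cn {φ}) := by
      refine ⟨hφ, fun ψ hψ hψφ hψS => hΘ hφ hψ hψφ.symm ?_⟩
      rwa [Cn_Cn] at hψS
    rw [selectedBy_eq_singleton hsel (subset_Cn _ (subset_Cn _ rfl))]

end Representation

lemma exists_finset_pairwise_image_Cn_singleton_eq {𝒯 : Set (Set (PropForm α))}
    (hfin : 𝒯.Finite) (hanti : ∀ T ∈ 𝒯, ∀ T' ∈ 𝒯, T ⊆ T' → T = T')
    (hgen : ∀ T ∈ 𝒯, ∃ F : Finset (PropForm α), T = Cn ↑F) :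
    ∃ Θ : Finset (PropForm α),
      (Θ : Set (PropForm α)).Pairwise (fun φ ψ => ψ ∉ Cn {φ}) ∧ (fun φ => Cn {φ}) '' Θ = 𝒯 := by
  classical
  have hsingle : ∀ T ∈ 𝒯, ∃ θ : PropForm α, Cn {θ} = T := fun T hT => by
    obtain ⟨F, rfl⟩ := hgen T hT
    exact exists_Cn_singleton_eq F
  choose! θ hθ using hsingle
  refine ⟨hfin.toFinset.image θ, ?_, ?_⟩
  · rw [Finset.coe_image, Set.Finite.coe_toFinset]
    rintro _ ⟨T, hT, rfl⟩ _ ⟨T', hT', rfl⟩ hne hmem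
    have hsub : T' ⊆ T := by
      rw [← hθ T hT, ← hθ T' hT']
      exact Cn_singleton_subset_iff.2 hmem
    exact hne (congrArg θ (hanti T' hT' T hT hsub)).symm
  · rw [Finset.coe_image, Set.Finite.coe_toFinset, Set.image_image]
    exact (Set.image_congr hθ).trans (Set.image_id' 𝒯)

theorem representable_finite_iff_general {α : Type}
    (𝒯 : Set (Set (PropForm α))) :
    (∃ (D : Set (Default α)) (W : Set (PropForm α)), D.Finite ∧ W.Finite ∧ ext D W = 𝒯) ↔
      (𝒯.Finite ∧ (∀ T ∈ 𝒯, IsTheory T) ∧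
        (∀ T ∈ 𝒯, ∀ T' ∈ 𝒯, T ⊆ T' → T = T') ∧
        ∀ T ∈ 𝒯, ∃ F : Finset (PropForm α), T = Cn ↑F) := by
  constructor
  · rintro ⟨D, W, hD, hW, rfl⟩
    exact ⟨ext_finite hD W, fun S hS => IsExtension.isTheory hS,
      fun S hS S' hS' => IsExtension.eq_of_subset hS hS',
      fun S hS => IsExtension.exists_finset_eq_Cn hD hW hS⟩
  · rintro ⟨hfin, -, hanti, hgen⟩
    obtain ⟨Θ, hΘ, rfl⟩ := exists_finset_pairwise_image_Cn_singleton_eq hfin hanti hgen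
    rcases Θ.eq_empty_or_nonempty with rfl | hne
    · refine ⟨{contradictoryDefault}, ∅, Set.finite_singleton _, Set.finite_empty, ?_⟩
      rw [ext_contradictoryDefault consistent_empty, Finset.coe_empty, Set.image_empty]
    · exact ⟨selectorDefaults Θ, ∅, Θ.finite_toSet.image _, Set.finite_empty,
        ext_selectorDefaults hne hΘ⟩

/-- representability by a finite default theory. -/
theorem representable_finite_iff {α : Type} [Denumerable α]
    (𝒯 : Set (Set (PropForm α))) :
    (∃ (D : Set (Default α)) (W : Set (PropForm α)), D.Finite ∧ W.Finite ∧ ext D W = 𝒯) ↔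
      (𝒯.Finite ∧ (∀ T ∈ 𝒯, IsTheory T) ∧
        (∀ T ∈ 𝒯, ∀ T' ∈ 𝒯, T ⊆ T' → T = T') ∧
        ∀ T ∈ 𝒯, ∃ F : Finset (PropForm α), T = Cn ↑F) :=
  representable_finite_iff_general 𝒯
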